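/- Write Z ∈ ℝ^n near infinity in polar-type coordinates x = 1/|Z|, y = angular coordinates, and let (ξ, η) be the fiber coordinates defined by writing a covector as ξ dx/x³ + η·dy/x. Suppose Z lies in the region where Z_1 dominates, with x = 1/|Z|, y_j = Z_j/|Z| (2 ≤ j ≤ n). Then for the 1-form (2tζ − z)·dζ restricted to { ζ = Z } (so dζ = dZ in the above coordinates) with z = z_0^⊥ + 2s̃ Ẑ, t = t_0 + s̃/|Z|, z_0^⊥ ⊥ Z, one has ξ = −2t_0 + O(x) and η_j = −(z_0')_j − ((z_0'·y) y_j)/(1 − |y|²), where z_0' = ((z_0^⊥)_2, ..., (z_0^⊥)_n). In particular the map (z_0', t_0) ↦ (ξ, η) is invertible for |y| small. -/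

import Mathlib

/-!
Writing `ζ = (√(1 - |y|²), y) / x` and `z₀^⊥ = (-⟪z₀', y⟫ / √(1 - |y|²), z₀')`, the orthogonality
`z₀^⊥ ⊥ ζ` kills every term of `(2t₀ζ - z₀^⊥)·dζ` mixing `z₀'` with `dx`, and `|ζ|² = x⁻²` kills
every term mixing `t₀` with `dy`. What is left is `-2t₀ dx/x³ - ⟪z₀' + c y, dy⟫/x` with
`c = ⟪z₀', y⟫/(1 - |y|²)`, so `ξ = -2t₀` exactly. Pairing `z₀' + c y` with `y` recovers `c`,
which inverts `z₀' ↦ z₀' + c y` whenever `|y| < 1`.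
-/

open scoped RealInnerProductSpace

noncomputable section

/-- First component `ζ₁ = √(1-|y|²)/x` of `ζ` in the coordinates `x = 1/|ζ|`,
`y = angular coordinates` (region where `ζ₁` dominates). -/
def zeta1 {m : ℕ} (p : ℝ × EuclideanSpace ℝ (Fin m)) : ℝ :=
  Real.sqrt (1 - ‖p.2‖ ^ 2) / p.1

/-- Remaining components `ζ' = y/x` of `ζ`. -/
def zetaRest {m : ℕ} (p : ℝ × EuclideanSpace ℝ (Fin m)) : EuclideanSpace ℝ (Fin m) :=
  p.1⁻¹ • p.2

/-- The 1-form `(2tζ - z)·dζ = (2t₀ζ - z₀^⊥)·dζ` pulled back to the `(x,y)` coordinates,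
where `z₀^⊥ ⊥ ζ` has components `(z₀^⊥)₁ = -⟪z₀', y⟫/√(1-|y|²)` and `z₀'`. -/
def oneForm {m : ℕ} (t₀ : ℝ) (z' : EuclideanSpace ℝ (Fin m))
    (p u : ℝ × EuclideanSpace ℝ (Fin m)) : ℝ :=
  (2 * t₀ * zeta1 p + ⟪z', p.2⟫ / Real.sqrt (1 - ‖p.2‖ ^ 2)) * fderiv ℝ zeta1 p u
    + ⟪(2 * t₀) • zetaRest p - z', fderiv ℝ (zetaRest (m := m)) p u⟫

lemma one_sub_norm_sq_pos {E : Type*} [SeminormedAddCommGroup E] {y : E} (hy : ‖y‖ < 1) :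
    0 < 1 - ‖y‖ ^ 2 := by
  nlinarith [norm_nonneg y]

section

variable {m : ℕ} {x : ℝ} {y : EuclideanSpace ℝ (Fin m)}

lemma fderiv_zeta1_apply (hx : x ≠ 0) (hy : ‖y‖ < 1) (u : ℝ × EuclideanSpace ℝ (Fin m)) :
    fderiv ℝ zeta1 (x, y) u
      = -(Real.sqrt (1 - ‖y‖ ^ 2) / x ^ 2) * u.1
        - ⟪y, u.2⟫ / (Real.sqrt (1 - ‖y‖ ^ 2) * x) := by
  have hsqrt := ((hasFDerivAt_const (1 : ℝ) (x, y)).sub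
    (hasFDerivAt_snd (𝕜 := ℝ) (p := (x, y))).norm_sq).sqrt (one_sub_norm_sq_pos hy).ne'
  have hinv := (hasDerivAt_inv hx).comp_hasFDerivAt (x, y) (hasFDerivAt_fst (𝕜 := ℝ))
  have hzeta1 : HasFDerivAt zeta1 _ (x, y) := (hsqrt.mul hinv).congr_of_eventuallyEq
    (Filter.Eventually.of_forall fun p => by simp [zeta1, div_eq_mul_inv])
  rw [hzeta1.fderiv]
  simp only [Pi.sub_apply, add_apply, smul_apply, neg_apply, ContinuousLinearMap.coe_comp,
    Function.comp_apply, ContinuousLinearMap.coe_fst', ContinuousLinearMap.coe_snd',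
    innerSL_apply_apply, smul_eq_mul, zero_sub, nsmul_eq_mul, Nat.cast_ofNat]
  field_simp
  ring

lemma fderiv_zetaRest_apply (hx : x ≠ 0) (u : ℝ × EuclideanSpace ℝ (Fin m)) :
    fderiv ℝ zetaRest (x, y) u = x⁻¹ • u.2 + (-(x ^ 2)⁻¹ * u.1) • y := by
  have hinv := (hasDerivAt_inv hx).comp_hasFDerivAt (x, y) (hasFDerivAt_fst (𝕜 := ℝ))
  have hzetaRest : HasFDerivAt zetaRest _ (x, y) :=
    (hinv.smul (hasFDerivAt_snd (𝕜 := ℝ) (p := (x, y)))).congr_of_eventuallyEq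
      (Filter.Eventually.of_forall fun p => by simp [zetaRest])
  rw [hzetaRest.fderiv]
  simp only [add_apply, smul_apply, ContinuousLinearMap.coe_snd',
    ContinuousLinearMap.smulRight_apply, ContinuousLinearMap.coe_fst', Function.comp_apply,
    smul_eq_mul]

lemma oneForm_eq (t₀ : ℝ) (z' : EuclideanSpace ℝ (Fin m)) (hx : x ≠ 0) (hy : ‖y‖ < 1)
    (u : ℝ × EuclideanSpace ℝ (Fin m)) :
    oneForm t₀ z' (x, y) u
      = -2 * t₀ * (u.1 / x ^ 3) - ⟪z' + (⟪z', y⟫ / (1 - ‖y‖ ^ 2)) • y, u.2⟫ / x := by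
  rw [oneForm, fderiv_zeta1_apply hx hy, fderiv_zetaRest_apply hx]
  simp only [zeta1, zetaRest, inner_add_left, inner_add_right, inner_sub_left,
    real_inner_smul_left, real_inner_smul_right, real_inner_self_eq_norm_sq,
    real_inner_comm y]
  have hpos := one_sub_norm_sq_pos hy
  set s := Real.sqrt (1 - ‖y‖ ^ 2)
  have hs : s ≠ 0 := (Real.sqrt_pos.2 hpos).ne'
  have hnorm : ‖y‖ ^ 2 = 1 - s ^ 2 := by rw [Real.sq_sqrt hpos.le]; ring
  rw [hnorm, sub_sub_cancel]
  field_simp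
  ring

end

lemma bijective_neg_sub_inner_div_smul {E : Type*} [NormedAddCommGroup E]
    [InnerProductSpace ℝ E] {y : E} (hy : ‖y‖ < 1) :
    Function.Bijective fun v : E => -v - (⟪v, y⟫ / (1 - ‖y‖ ^ 2)) • y := by
  have hpos := one_sub_norm_sq_pos hy
  -- the image `w` of `v` satisfies `⟪w, y⟫ = -⟪v, y⟫ / (1 - ‖y‖²)`
  refine Function.bijective_iff_has_inverse.mpr ⟨fun w => -w + ⟪w, y⟫ • y, fun v => ?_, fun w => ?_⟩
  · simp only [inner_sub_left, inner_neg_left, real_inner_smul_left, real_inner_self_eq_norm_sq]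
    match_scalars
    · ring
    · field_simp
      ring
  · simp only [inner_add_left, inner_neg_left, real_inner_smul_left, real_inner_self_eq_norm_sq]
    match_scalars
    · ring
    · field_simp
      ring

/-- in the 1-cusp frame `dx/x³`, `dy/x` near `|Z| = ∞`, the coefficients of
the 1-form `(2tζ - z)·dζ` along the bicharacteristic with data `(t₀, z₀^⊥)` are
`ξ = -2t₀ + O(x)` and `η_j = -(z₀')_j - (z₀'·y) y_j/(1 - |y|²)`; and for `|y|` small the
map `(z₀', t₀) ↦ (ξ, η)` is invertible. -/
theorem stmt11 (m : ℕ) (t₀ : ℝ) (z' : EuclideanSpace ℝ (Fin m)) :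
    (∃ C : ℝ, ∀ x ∈ Set.Ioc (0 : ℝ) 1, ∀ y : EuclideanSpace ℝ (Fin m), ‖y‖ ≤ 1 / 2 →
      |x ^ 3 * oneForm t₀ z' (x, y) (1, 0) - (-2 * t₀)| ≤ C * x) ∧
    (∀ x ∈ Set.Ioc (0 : ℝ) 1, ∀ y : EuclideanSpace ℝ (Fin m), ‖y‖ ≤ 1 / 2 → ∀ j : Fin m,
      x * oneForm t₀ z' (x, y) (0, EuclideanSpace.single j (1 : ℝ))
        = -(z' j) - ⟪z', y⟫ * y j / (1 - ‖y‖ ^ 2)) ∧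
    (∀ y : EuclideanSpace ℝ (Fin m), ‖y‖ ≤ 1 / 2 →
      Function.Bijective (fun q : EuclideanSpace ℝ (Fin m) × ℝ =>
        ((-2 * q.2 : ℝ), -q.1 - (⟪q.1, y⟫ / (1 - ‖y‖ ^ 2)) • y))) := by
  have hy_lt {y : EuclideanSpace ℝ (Fin m)} (hy : ‖y‖ ≤ 1 / 2) : ‖y‖ < 1 := by linarith
  refine ⟨⟨0, fun x hx y hy => ?_⟩, fun x hx y hy j => ?_, fun y hy => ?_⟩
  · have hx0 : x ≠ 0 := hx.1.ne'
    rw [oneForm_eq t₀ z' hx0 (hy_lt hy)]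
    field_simp
    simp
  · have hx0 : x ≠ 0 := hx.1.ne'
    rw [oneForm_eq t₀ z' hx0 (hy_lt hy)]
    simp only [zero_div, mul_zero, EuclideanSpace.inner_single_right, PiLp.add_apply,
      PiLp.smul_apply, smul_eq_mul, Real.ringHom_apply, one_mul, zero_sub]
    field_simp
    ring
  · exact ((mulLeft_bijective₀ (-2 : ℝ) (by norm_num)).prodMap
      (bijective_neg_sub_inner_div_smul (hy_lt hy))).comp Prod.swap_bijective
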